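/- arXiv:2312.14290 — 8 statements merged into one kernel-verified Lean document; each statement's English description precedes it below -/
import Mathlib

section
/- Let χ : ℂ → ℂ satisfy assumption (A1), fix 0 < λ < π/2 and set s = sin λ, c = cos λ. Then for every z ∈ ℂ there exists K₁ ∈ ℕ such that |χ(s·y·z) − 1| ≤ 1/2 for all k ≥ K₁ and all real y with 0 ≤ y ≤ c^k (in particular χ(s·c^k·z) ≠ 0 for k ≥ K₁), the series ∑_{k ≥ K₁} log χ(s·c^k·z) converges absolutely, and consequently the limit lim_{K→∞} ∏_{k=0}^{K−1} χ(s·c^k·z) exists in ℂ. -/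
/-!
By (A1) and the mean value theorem, `‖χ (x z) - 1‖ ≤ C₀(z) x` for small `x ≥ 0`. Since
`s cᵏ → 0` geometrically, the factors `χ (s cᵏ z)` eventually lie in the disc `‖w - 1‖ ≤ 1/2`,
where `‖log w‖ ≤ (3/2) ‖w - 1‖`, and `∑ ‖χ (s cᵏ z) - 1‖` is dominated by a geometric series.
Both the series of logarithms and the infinite product therefore converge.
-/

open Filter Topology

structure AssumptionA1 (χ : ℂ → ℂ) where
  chi_zero : χ 0 = 1
  δ : ℝ
  δ_pos : 0 < δ
  C₀ : ℂ → ℝ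
  C₀_nonneg : ∀ z : ℂ, 0 ≤ C₀ z
  deriv_bound : ∀ (z : ℂ) (x : ℝ), |x| < δ →
    ∃ d : ℂ, HasDerivAt (fun y : ℝ => χ ((y : ℂ) * z)) d x ∧ ‖d‖ ≤ C₀ z
  η : ℝ
  η_pos : 0 < η
  C₀unif : ℝ
  C₀unif_nonneg : 0 ≤ C₀unif
  unif : ∀ z : ℂ, ‖z‖ < η → C₀ z ≤ C₀unif

namespace Complex

theorem summable_norm_log_of_summable_norm_sub_one {ι : Type*} {u : ι → ℂ}
    (hu : ∀ i, ‖u i - 1‖ ≤ 1 / 2) (hsum : Summable fun i => ‖u i - 1‖) :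
    Summable fun i => ‖log (u i)‖ := by
  refine (hsum.mul_left (3 / 2)).of_nonneg_of_le (fun _ => norm_nonneg _) fun i => ?_
  simpa using norm_log_one_add_half_le_self (hu i)

theorem exists_tendsto_prod_range_of_summable_norm_sub_one {u : ℕ → ℂ}
    (hsum : Summable fun k => ‖u k - 1‖) :
    ∃ F, Tendsto (fun K => ∏ k ∈ Finset.range K, u k) atTop (𝓝 F) := by
  have hmul := Complex.multipliable_one_add_of_summable hsum.of_norm
  simp only [add_sub_cancel] at hmul
  exact ⟨_, hmul.tendsto_prod_tprod_nat⟩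

end Complex

namespace AssumptionA1

variable {χ : ℂ → ℂ} (hχ : AssumptionA1 χ)
include hχ

theorem norm_sub_one_le (z : ℂ) {x : ℝ} (hx₀ : 0 ≤ x) (hxδ : x < hχ.δ) :
    ‖χ (x * z) - 1‖ ≤ hχ.C₀ z * x := by
  have hIcc : ∀ t ∈ Set.Icc 0 x, |t| < hχ.δ := fun t ht =>
    abs_lt.2 ⟨by linarith [ht.1, hχ.δ_pos], ht.2.trans_lt hxδ⟩
  choose! d hd hd_le using fun t (ht : t ∈ Set.Icc 0 x) => hχ.deriv_bound z t (hIcc t ht)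
  have hmvt := norm_image_sub_le_of_norm_deriv_le_segment'
    (fun t ht => (hd t ht).hasDerivWithinAt) (fun t ht => hd_le t (Set.Ico_subset_Icc_self ht))
    x (Set.right_mem_Icc.2 hx₀)
  simpa [hχ.chi_zero] using hmvt

theorem exists_pos_norm_sub_one_le (z : ℂ) :
    ∃ ε > 0, ∀ x : ℝ, 0 ≤ x → x < ε →
      ‖χ (x * z) - 1‖ ≤ hχ.C₀ z * x ∧ hχ.C₀ z * x ≤ 1 / 2 := by
  have hC := hχ.C₀_nonneg z
  refine ⟨min hχ.δ (1 / (2 * (hχ.C₀ z + 1))), lt_min hχ.δ_pos (by positivity),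
    fun x hx₀ hxε => ⟨hχ.norm_sub_one_le z hx₀ (hxε.trans_le (min_le_left _ _)), ?_⟩⟩
  have hx : x * (2 * (hχ.C₀ z + 1)) ≤ 1 :=
    (le_div_iff₀ (by positivity)).1 ((hxε.trans_le (min_le_right _ _)).le.trans (by simp))
  nlinarith

theorem exists_tendsto_prod_geometric {s c : ℝ} (hs : 0 ≤ s) (hc₀ : 0 ≤ c) (hc₁ : c < 1)
    (z : ℂ) :
    ∃ K₁ : ℕ,
      (∀ k : ℕ, K₁ ≤ k → ∀ y : ℝ, 0 ≤ y → y ≤ c ^ k →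
        ‖χ (((s * y : ℝ) : ℂ) * z) - 1‖ ≤ 1 / 2) ∧
      (∀ k : ℕ, K₁ ≤ k → χ (((s * c ^ k : ℝ) : ℂ) * z) ≠ 0) ∧
      Summable (fun k : ℕ => ‖Complex.log (χ (((s * c ^ (K₁ + k) : ℝ) : ℂ) * z))‖) ∧
      ∃ F : ℂ, Tendsto (fun K : ℕ => ∏ k ∈ Finset.range K, χ (((s * c ^ k : ℝ) : ℂ) * z))
        atTop (𝓝 F) := by
  obtain ⟨ε, hε, hsmall⟩ := hχ.exists_pos_norm_sub_one_le z
  have hgeom : Tendsto (fun k : ℕ => s * c ^ k) atTop (𝓝 0) := by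
    simpa using (tendsto_pow_atTop_nhds_zero_of_lt_one hc₀ hc₁).const_mul s
  obtain ⟨K₁, hK₁⟩ := eventually_atTop.1 (hgeom.eventually_lt_const hε)
  have hbound : ∀ k, K₁ ≤ k → ∀ y : ℝ, 0 ≤ y → y ≤ c ^ k →
      ‖χ (((s * y : ℝ) : ℂ) * z) - 1‖ ≤ hχ.C₀ z * (s * y) ∧ hχ.C₀ z * (s * y) ≤ 1 / 2 :=
    fun k hk y hy₀ hy => hsmall _ (mul_nonneg hs hy₀)
      ((mul_le_mul_of_nonneg_left hy hs).trans_lt (hK₁ k hk))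
  have hhalf : ∀ k, K₁ ≤ k → ∀ y : ℝ, 0 ≤ y → y ≤ c ^ k →
      ‖χ (((s * y : ℝ) : ℂ) * z) - 1‖ ≤ 1 / 2 :=
    fun k hk y hy₀ hy => (hbound k hk y hy₀ hy).1.trans (hbound k hk y hy₀ hy).2
  set u : ℕ → ℂ := fun k => χ (((s * c ^ k : ℝ) : ℂ) * z)
  have hu_half : ∀ k, K₁ ≤ k → ‖u k - 1‖ ≤ 1 / 2 :=
    fun k hk => hhalf k hk _ (pow_nonneg hc₀ k) le_rfl
  have hsum : Summable fun k => ‖u k - 1‖ := by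
    refine Summable.of_norm_bounded_eventually_nat
      ((summable_geometric_of_lt_one hc₀ hc₁).mul_left (hχ.C₀ z * s)) ?_
    filter_upwards [eventually_ge_atTop K₁] with k hk
    rw [norm_norm, mul_assoc]
    exact (hbound k hk _ (pow_nonneg hc₀ k) le_rfl).1
  refine ⟨K₁, hhalf, fun k hk hzero => ?_, ?_,
    Complex.exists_tendsto_prod_range_of_summable_norm_sub_one hsum⟩
  · have h := hu_half k hk
    rw [show u k = 0 from hzero] at h
    norm_num at h
  · exact Complex.summable_norm_log_of_summable_norm_sub_one
      (fun k => hu_half (K₁ + k) (Nat.le_add_right _ _))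
      (hsum.comp_injective (add_right_injective K₁))

end AssumptionA1

/-- Under assumption (A1), for `0 < λ < π/2` with `s = sin λ`, `c = cos λ`,
for every `z ∈ ℂ` there is `K₁` such that `|χ(s y z) − 1| ≤ 1/2` for all `k ≥ K₁` and
`0 ≤ y ≤ c^k` (so in particular `χ(s c^k z) ≠ 0` for `k ≥ K₁`), the series
`∑_{k ≥ K₁} log χ(s c^k z)` converges absolutely, and the limit
`lim_{K→∞} ∏_{k=0}^{K−1} χ(s c^k z)` exists in `ℂ`. -/
theorem statement0 (χ : ℂ → ℂ) (hχ : AssumptionA1 χ) (lam : ℝ)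
    (hlam : 0 < lam) (hlam' : lam < Real.pi / 2) (z : ℂ) :
    ∃ K₁ : ℕ,
      (∀ k : ℕ, K₁ ≤ k → ∀ y : ℝ, 0 ≤ y → y ≤ Real.cos lam ^ k →
        ‖χ (((Real.sin lam * y : ℝ) : ℂ) * z) - 1‖ ≤ 1 / 2) ∧
      (∀ k : ℕ, K₁ ≤ k →
        χ (((Real.sin lam * Real.cos lam ^ k : ℝ) : ℂ) * z) ≠ 0) ∧
      Summable (fun k : ℕ =>
        ‖Complex.log (χ (((Real.sin lam * Real.cos lam ^ (K₁ + k) : ℝ) : ℂ) * z))‖) ∧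
      ∃ F : ℂ, Tendsto
        (fun K : ℕ => ∏ k ∈ Finset.range K,
          χ (((Real.sin lam * Real.cos lam ^ k : ℝ) : ℂ) * z))
        atTop (𝓝 F) := by
  have hsin : 0 < Real.sin lam := Real.sin_pos_of_pos_of_lt_pi hlam (by linarith [Real.pi_pos])
  have hcos : 0 < Real.cos lam := Real.cos_pos_of_mem_Ioo ⟨by linarith [Real.pi_pos], hlam'⟩
  have hcos_lt : Real.cos lam < 1 := by nlinarith [Real.sin_sq_add_cos_sq lam]
  exact hχ.exists_tendsto_prod_geometric hsin.le hcos.le hcos_lt z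
end

section
/- Let χ : ℂ → ℂ satisfy assumption (A1), fix 0 < λ < π/2 and set s = sin λ, c = cos λ. Then for every z ∈ ℂ there exists K₁ ∈ ℕ such that for all k ≥ K₁ one has c^k < δ, |χ(s·y·z) − 1| ≤ 1/2 for all 0 ≤ y ≤ c^k, and the bound |log χ(s·c^k·z)| ≤ 2·c^k·C₀(s·z) holds, where log is the principal branch of the complex logarithm. -/
/-! Since `χ 0 = 1`, the mean value inequality gives `‖χ (y z) - 1‖ ≤ C₀ z · y` for `0 ≤ y < δ`.
As `c = cos λ ∈ (0, 1)`, `c ^ k → 0`, so eventually `c ^ k < δ` and `C₀ (s z) · c ^ k ≤ 1/2`;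
then `‖log (1 + u)‖ ≤ 3/2 ‖u‖` for `‖u‖ ≤ 1/2` yields the logarithm bound. -/

open Filter Topology

namespace AssumptionA1

variable {χ : ℂ → ℂ}

theorem norm_sub_one_le_s1 (hχ : AssumptionA1 χ) (z : ℂ) {y : ℝ} (hy : 0 ≤ y) (hyδ : y < hχ.δ) :
    ‖χ (y * z) - 1‖ ≤ hχ.C₀ z * y := by
  have hderiv : ∀ x ∈ Set.Icc 0 y,
      ∃ d : ℂ, HasDerivAt (fun t : ℝ => χ ((t : ℂ) * z)) d x ∧ ‖d‖ ≤ hχ.C₀ z := fun x hx =>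
    hχ.deriv_bound z x (by rw [abs_of_nonneg hx.1]; exact hx.2.trans_lt hyδ)
  choose! D hD using hderiv
  have := (convex_Icc 0 y).norm_image_sub_le_of_norm_hasDerivWithin_le
    (fun x hx => (hD x hx).1.hasDerivWithinAt) (fun x hx => (hD x hx).2)
    (Set.left_mem_Icc.mpr hy) (Set.right_mem_Icc.mpr hy)
  simpa [hχ.chi_zero, abs_of_nonneg hy] using this

end AssumptionA1

theorem Complex.norm_log_le_of_norm_sub_one_le {w : ℂ} (hw : ‖w - 1‖ ≤ 1 / 2) :
    ‖Complex.log w‖ ≤ 3 / 2 * ‖w - 1‖ := by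
  simpa using Complex.norm_log_one_add_half_le_self hw

/-- Under assumption (A1), for `0 < λ < π/2`, `s = sin λ`, `c = cos λ`,
for every `z ∈ ℂ` there is `K₁` such that for all `k ≥ K₁`: `c^k < δ`,
`|χ(s y z) − 1| ≤ 1/2` for all `0 ≤ y ≤ c^k`, and
`|log χ(s c^k z)| ≤ 2 c^k C₀(s z)` (principal branch of the logarithm). -/
theorem statement1 (χ : ℂ → ℂ) (hχ : AssumptionA1 χ) (lam : ℝ)
    (hlam : 0 < lam) (hlam' : lam < Real.pi / 2) (z : ℂ) :
    ∃ K₁ : ℕ, ∀ k : ℕ, K₁ ≤ k →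
      Real.cos lam ^ k < hχ.δ ∧
      (∀ y : ℝ, 0 ≤ y → y ≤ Real.cos lam ^ k →
        ‖χ (((Real.sin lam * y : ℝ) : ℂ) * z) - 1‖ ≤ 1 / 2) ∧
      ‖Complex.log (χ (((Real.sin lam * Real.cos lam ^ k : ℝ) : ℂ) * z))‖ ≤
        2 * Real.cos lam ^ k * hχ.C₀ (((Real.sin lam : ℝ) : ℂ) * z) := by
  set c := Real.cos lam
  set C := hχ.C₀ (((Real.sin lam : ℝ) : ℂ) * z)
  have hc0 : 0 < c := Real.cos_pos_of_mem_Ioo ⟨by linarith [Real.pi_pos], hlam'⟩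
  have hc1 : c < 1 := by
    simpa using Real.cos_lt_cos_of_nonneg_of_le_pi le_rfl (by linarith [Real.pi_pos]) hlam
  have hpow := tendsto_pow_atTop_nhds_zero_of_lt_one hc0.le hc1
  have hCpow : Tendsto (fun k => C * c ^ k) atTop (𝓝 0) := by simpa using hpow.const_mul C
  obtain ⟨K, hK⟩ := eventually_atTop.1 <|
    (hpow.eventually (gt_mem_nhds hχ.δ_pos)).and (hCpow.eventually (gt_mem_nhds one_half_pos))
  refine ⟨K, fun k hk => ?_⟩
  obtain ⟨hδ, hsmall⟩ := hK k hk
  have hbound : ∀ y : ℝ, 0 ≤ y → y ≤ c ^ k →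
      ‖χ (((Real.sin lam * y : ℝ) : ℂ) * z) - 1‖ ≤ C * c ^ k := fun y hy hyc => by
    rw [show ((Real.sin lam * y : ℝ) : ℂ) * z = y * (((Real.sin lam : ℝ) : ℂ) * z) by
      push_cast; ring]
    exact (hχ.norm_sub_one_le_s1 _ hy (hyc.trans_lt hδ)).trans
      (mul_le_mul_of_nonneg_left hyc (hχ.C₀_nonneg _))
  have hhalf : ∀ y : ℝ, 0 ≤ y → y ≤ c ^ k →
      ‖χ (((Real.sin lam * y : ℝ) : ℂ) * z) - 1‖ ≤ 1 / 2 := fun y hy hyc =>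
    (hbound y hy hyc).trans hsmall.le
  have hck : 0 ≤ c ^ k := by positivity
  refine ⟨hδ, hhalf, ?_⟩
  calc _ ≤ 3 / 2 * ‖χ (((Real.sin lam * c ^ k : ℝ) : ℂ) * z) - 1‖ :=
        Complex.norm_log_le_of_norm_sub_one_le (hhalf _ hck le_rfl)
    _ ≤ 3 / 2 * (C * c ^ k) := by gcongr; exact hbound _ hck le_rfl
    _ ≤ 2 * c ^ k * C := by nlinarith [hχ.C₀_nonneg (((Real.sin lam : ℝ) : ℂ) * z)]
end

section
/- Let χ_σ : ℂ → ℂ satisfy assumption (A1), fix 0 < λ < π/2 and set s = sin λ, c = cos λ. Let χ_ρ : ℂ → ℂ be any function that is continuous at 0 with χ_ρ(0) = 1. Then for every z ∈ ℂ the limit lim_{K→∞} [ χ_ρ(c^K·z) · ∏_{k=0}^{K−1} χ_σ(s·c^k·z) ] exists and equals ∏_{k=0}^{∞} χ_σ(s·c^k·z); in particular the limit is independent of χ_ρ. -/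
/-! By the mean value theorem, (A1) gives `‖χσ (x z) - 1‖ ≤ C₀ z · |x|` for small `|x|`, so the
factors `χσ (s cᵏ z)` differ from `1` by a summable (geometric) amount and the partial products
converge. The extra factor `χρ (cᴷ z)` tends to `χρ 0 = 1` because `cᴷ → 0`. -/

open Filter Topology

namespace AssumptionA1

variable {χ : ℂ → ℂ}

theorem norm_sub_one_le_s4 (h : AssumptionA1 χ) (z : ℂ) {x : ℝ} (hx : |x| < h.δ) :
    ‖χ (x * z) - 1‖ ≤ h.C₀ z * |x| := by
  have hderiv : ∀ y ∈ Metric.ball (0 : ℝ) h.δ,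
      ∃ d : ℂ, HasDerivAt (fun y : ℝ => χ (y * z)) d y ∧ ‖d‖ ≤ h.C₀ z := fun y hy =>
    h.deriv_bound z y (by simpa using hy)
  have hmvt := (convex_ball (0 : ℝ) h.δ).norm_image_sub_le_of_norm_deriv_le
    (fun y hy => (hderiv y hy).elim fun _ hd => hd.1.differentiableAt)
    (fun y hy => (hderiv y hy).elim fun _ hd => hd.1.deriv ▸ hd.2)
    (Metric.mem_ball_self h.δ_pos) (by simpa using hx)
  simpa [h.chi_zero] using hmvt

theorem summable_sub_one (h : AssumptionA1 χ) {x : ℕ → ℝ} (hx : Summable x) (z : ℂ) :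
    Summable fun k => χ (x k * z) - 1 := by
  refine (hx.abs.mul_left (h.C₀ z)).of_norm_bounded_eventually_nat ?_
  have hsmall : ∀ᶠ k in atTop, |x k| < h.δ := by
    simpa using (hx.tendsto_atTop_zero.abs).eventually_lt_const (by simpa using h.δ_pos)
  filter_upwards [hsmall] with k hk using h.norm_sub_one_le_s4 z hk

theorem tendsto_prod_range (h : AssumptionA1 χ) {x : ℕ → ℝ} (hx : Summable x) (z : ℂ) :
    Tendsto (fun K => ∏ k ∈ Finset.range K, χ (x k * z)) atTop
      (𝓝 (∏' k, χ (x k * z))) := by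
  have hmult := Complex.multipliable_one_add_of_summable (h.summable_sub_one hx z)
  simp only [add_sub_cancel] at hmult
  exact hmult.tendsto_prod_tprod_nat

end AssumptionA1

/-- Under assumption (A1) for `χσ`, for `0 < λ < π/2`, `s = sin λ`,
`c = cos λ`, and any `χρ : ℂ → ℂ` continuous at `0` with `χρ 0 = 1`, for every `z` the
limit `lim_K [χρ(c^K z) ∏_{k<K} χσ(s c^k z)]` exists and equals
`lim_K ∏_{k<K} χσ(s c^k z)`; in particular the limit is independent of `χρ`. -/
theorem statement4 (χσ : ℂ → ℂ) (hχσ : AssumptionA1 χσ) (lam : ℝ)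
    (hlam : 0 < lam) (hlam' : lam < Real.pi / 2)
    (χρ : ℂ → ℂ) (hρcont : ContinuousAt χρ 0) (hρ0 : χρ 0 = 1) (z : ℂ) :
    ∃ F : ℂ,
      Tendsto (fun K : ℕ => ∏ k ∈ Finset.range K,
          χσ (((Real.sin lam * Real.cos lam ^ k : ℝ) : ℂ) * z)) atTop (𝓝 F) ∧
      Tendsto (fun K : ℕ =>
          χρ (((Real.cos lam ^ K : ℝ) : ℂ) * z) *
            ∏ k ∈ Finset.range K,
              χσ (((Real.sin lam * Real.cos lam ^ k : ℝ) : ℂ) * z)) atTop (𝓝 F) := by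
  have hcos : |Real.cos lam| < 1 := by
    refine abs_lt.mpr ⟨?_, ?_⟩
    · linarith [Real.cos_pos_of_mem_Ioo ⟨by linarith [Real.pi_pos], hlam'⟩]
    · simpa using Real.cos_lt_cos_of_nonneg_of_le_pi le_rfl (by linarith [Real.pi_pos]) hlam
  have hprod := hχσ.tendsto_prod_range
    ((summable_geometric_of_abs_lt_one hcos).mul_left (Real.sin lam)) z
  refine ⟨_, hprod, ?_⟩
  have hscale : Tendsto (fun K : ℕ => ((Real.cos lam ^ K : ℝ) : ℂ) * z) atTop (𝓝 0) := by
    simpa using ((Complex.continuous_ofReal.tendsto 0).comp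
      (tendsto_pow_atTop_nhds_zero_of_abs_lt_one hcos)).mul_const z
  have hρ : Tendsto (fun K : ℕ => χρ (((Real.cos lam ^ K : ℝ) : ℂ) * z)) atTop (𝓝 1) :=
    hρ0 ▸ hρcont.tendsto.comp hscale
  simpa using hρ.mul hprod
end

section
/- Let n ≥ 1 be an integer and let p_n(x) = ∑_{j=0}^{n} binom(n,j)·(−x)^j/j! be the n-th Laguerre polynomial. Fix 0 < λ < π/2 and set s = sin λ, c = cos λ. Define F : ℝ → ℝ by F(t) = exp(−t²/2) · ∏_{k=0}^{∞} p_n(s²·c^{2k}·t²) (the infinite product converges for every t). Then there exist no constants α, β, γ ∈ ℝ and no ε > 0 such that F(t) = exp(α·t² + β·t + γ) for all t with |t| < ε; that is, F is not the restriction to the reals of a Gaussian characteristic function. -/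
/-!
Evenness of `exp (-t²/2) G(s²t²)` kills the linear term of a Gaussian exponent, so the product
`G a = ∏ₖ p_n (a c^{2k})` would equal `exp (B a)` for small `a ≥ 0`. Since
`G a = p_n a · G (c² a)`, the polynomial `p_n` would then itself agree with an exponential on an
interval `[0, δ)`. But then `p_n(x)² = p_n(2x)` there, which forces `p_n` to be constant,
whereas its coefficient of `x` is `-n`.
-/

open Filter Topology

noncomputable def laguerrePoly (n : ℕ) (x : ℝ) : ℝ :=
  ∑ j ∈ Finset.range (n + 1), (n.choose j : ℝ) * (-x) ^ j / (Nat.factorial j : ℝ)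

open Polynomial Asymptotics

theorem multipliable_comp_mul_geometric {𝕜 : Type*} [NontriviallyNormedField 𝕜]
    [CompleteSpace 𝕜] {f : 𝕜 → 𝕜} {r : 𝕜} (hf : DifferentiableAt 𝕜 f 0) (hf0 : f 0 = 1)
    (hr : ‖r‖ < 1) (a : 𝕜) : Multipliable fun k : ℕ => f (a * r ^ k) := by
  have hO : (fun x => f x - 1) =O[𝓝 0] fun x => x := by simpa [hf0] using hf.isBigO_sub
  have hsum : Summable fun k : ℕ => ‖a * r ^ k‖ := by
    simpa [norm_mul, norm_pow] using
      (summable_geometric_of_lt_one (norm_nonneg r) hr).mul_left ‖a‖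
  simpa using multipliable_one_add_of_summable (hO.comp_summable_norm hsum)

theorem tprod_comp_mul_geometric_eq_mul {R M : Type*} [Monoid R] [CommMonoid M]
    [TopologicalSpace M] [T2Space M] [ContinuousMul M] {f : R → M} {a r : R}
    (h : Multipliable fun k : ℕ => f (a * r * r ^ k)) :
    ∏' k : ℕ, f (a * r ^ k) = f a * ∏' k : ℕ, f (a * r * r ^ k) := by
  have hshift (k : ℕ) : a * r ^ (k + 1) = a * r * r ^ k := by rw [pow_succ', mul_assoc]
  rw [tprod_eq_zero_mul' (by simpa only [hshift] using h)]
  simp only [pow_zero, mul_one, hshift]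

theorem eq_exp_of_tprod_comp_mul_geometric_eq_exp {f : ℝ → ℝ} {r B δ : ℝ} (hr0 : 0 ≤ r)
    (hr1 : r ≤ 1) (hf : ∀ a, Multipliable fun k : ℕ => f (a * r ^ k))
    (hprod : ∀ a, 0 ≤ a → a < δ → ∏' k : ℕ, f (a * r ^ k) = Real.exp (B * a))
    {a : ℝ} (ha : 0 ≤ a) (haδ : a < δ) : f a = Real.exp (B * (1 - r) * a) := by
  have hra : 0 ≤ a * r := mul_nonneg ha hr0
  have hraδ : a * r < δ := lt_of_le_of_lt (mul_le_of_le_one_right ha hr1) haδ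
  have h := tprod_comp_mul_geometric_eq_mul (hf (a * r))
  rw [hprod a ha haδ, hprod (a * r) hra hraδ] at h
  rw [eq_comm, ← eq_div_iff (Real.exp_ne_zero _), ← Real.exp_sub] at h
  rw [h]
  ring_nf

theorem eq_exp_of_comp_sq_eq_exp {φ : ℝ → ℝ} {α β γ ε : ℝ} (hε : 0 < ε) (hφ0 : φ 0 = 1)
    (h : ∀ t : ℝ, |t| < ε → φ (t ^ 2) = Real.exp (α * t ^ 2 + β * t + γ))
    {u : ℝ} (hu : 0 ≤ u) (huε : u < ε ^ 2) : φ u = Real.exp (α * u) := by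
  have hγ : γ = 0 := by
    have h0 := h 0 (by simpa using hε)
    simp only [hφ0, ne_eq, OfNat.ofNat_ne_zero, not_false_eq_true, zero_pow, mul_zero, add_zero,
      zero_add] at h0
    exact Real.exp_eq_one_iff γ |>.mp h0.symm
  have hβ : β = 0 := by
    have hpos := h (ε / 2) (by rw [abs_of_pos (by positivity)]; linarith)
    have hneg := h (-(ε / 2)) (by rw [abs_neg, abs_of_pos (by positivity)]; linarith)
    rw [neg_sq, hpos, Real.exp_eq_exp] at hneg
    nlinarith
  have ht : |√u| < ε := by rwa [abs_of_nonneg (Real.sqrt_nonneg u), Real.sqrt_lt' hε]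
  simpa [Real.sq_sqrt hu, hβ, hγ] using h (√u) ht

namespace Polynomial

theorem natDegree_eq_zero_of_mul_self_eq_comp {R : Type*} [CommRing R] [IsDomain R]
    {P : R[X]} {a : R} (ha : a ≠ 0) (h : P * P = P.comp (C a * X)) : P.natDegree = 0 := by
  rcases eq_or_ne P 0 with rfl | hP
  · rfl
  have := congrArg natDegree h
  rw [natDegree_mul hP hP, natDegree_comp, natDegree_C_mul_X a ha] at this
  omega

theorem natDegree_eq_zero_of_eval_eq_exp {P : ℝ[X]} {B δ : ℝ} (hδ : 0 < δ)
    (h : ∀ x, 0 ≤ x → x < δ → P.eval x = Real.exp (B * x)) : P.natDegree = 0 := by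
  refine natDegree_eq_zero_of_mul_self_eq_comp two_ne_zero (eq_of_infinite_eval_eq _ _ ?_)
  refine (Set.Ico_infinite (half_pos hδ)).mono ?_
  rintro x ⟨hx0, hxδ⟩
  simp only [Set.mem_ofPred_eq, eval_mul, eval_comp, eval_C, eval_X]
  rw [h x hx0 (by linarith), h (2 * x) (by linarith) (by linarith), ← Real.exp_add]
  ring_nf

end Polynomial

noncomputable def laguerre (n : ℕ) : ℝ[X] :=
  ∑ j ∈ Finset.range (n + 1), C ((n.choose j : ℝ) * (-1) ^ j / (j.factorial : ℝ)) * X ^ j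

theorem eval_laguerre (n : ℕ) (x : ℝ) : (laguerre n).eval x = laguerrePoly n x := by
  simp only [laguerre, laguerrePoly, eval_finsetSum, eval_mul, eval_C, eval_pow, eval_X,
    neg_pow x]
  exact Finset.sum_congr rfl fun j _ => by ring

theorem coeff_one_laguerre (n : ℕ) : (laguerre n).coeff 1 = -n := by
  rw [laguerre, finsetSum_coeff, Finset.sum_eq_single 1]
  · simp
  · intro j _ hj
    rw [coeff_C_mul_X_pow, if_neg (Ne.symm hj)]
  · intro h
    cases n <;> simp_all

theorem laguerrePoly_zero (n : ℕ) : laguerrePoly n 0 = 1 := by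
  rw [← eval_laguerre, ← coeff_zero_eq_eval_zero, laguerre, finsetSum_coeff]
  simp

theorem differentiable_laguerrePoly (n : ℕ) : Differentiable ℝ (laguerrePoly n) := by
  simpa only [funext (eval_laguerre n)] using (laguerre n).differentiable

/-- Let `n ≥ 1`, fix `0 < λ < π/2`, `s = sin λ`, `c = cos λ`, and let
`F t = exp(−t²/2) ∏_{k≥0} p_n(s² c^{2k} t²)` (the infinite product converges for every
`t`). Then there are no constants `α, β, γ ∈ ℝ` and no `ε > 0` such that
`F t = exp(α t² + β t + γ)` for all `|t| < ε`: `F` is not the restriction to the reals of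
a Gaussian characteristic function. -/
theorem statement8 (n : ℕ) (hn : 1 ≤ n) (lam : ℝ)
    (hlam : 0 < lam) (hlam' : lam < Real.pi / 2) :
    (∀ t : ℝ, Multipliable (fun k : ℕ =>
      laguerrePoly n (Real.sin lam ^ 2 * Real.cos lam ^ (2 * k) * t ^ 2))) ∧
    ¬ ∃ (α β γ ε : ℝ), 0 < ε ∧ ∀ t : ℝ, |t| < ε →
      Real.exp (-t ^ 2 / 2) *
          ∏' k : ℕ, laguerrePoly n (Real.sin lam ^ 2 * Real.cos lam ^ (2 * k) * t ^ 2) =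
        Real.exp (α * t ^ 2 + β * t + γ) := by
  set s := Real.sin lam
  set c := Real.cos lam
  have hs : 0 < s := Real.sin_pos_of_pos_of_lt_pi hlam (by linarith [Real.pi_pos])
  have hc2 : c ^ 2 < 1 := by nlinarith [Real.sin_sq_add_cos_sq lam]
  have hform (u : ℝ) (k : ℕ) : s ^ 2 * c ^ (2 * k) * u = s ^ 2 * u * (c ^ 2) ^ k := by
    rw [pow_mul]; ring
  have hmul (a : ℝ) : Multipliable fun k : ℕ => laguerrePoly n (a * (c ^ 2) ^ k) :=
    multipliable_comp_mul_geometric (differentiable_laguerrePoly n 0) (laguerrePoly_zero n)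
      (by rwa [Real.norm_of_nonneg (sq_nonneg c)]) a
  simp only [hform]
  refine ⟨fun t => hmul _, ?_⟩
  rintro ⟨α, β, γ, ε, hε, hF⟩
  set G : ℝ → ℝ := fun a => ∏' k : ℕ, laguerrePoly n (a * (c ^ 2) ^ k)
  have hG0 : G 0 = 1 := by simp [G, laguerrePoly_zero]
  have hG (a : ℝ) (ha : 0 ≤ a) (haε : a < s ^ 2 * ε ^ 2) :
      G a = Real.exp ((α + 1 / 2) / s ^ 2 * a) := by
    have := eq_exp_of_comp_sq_eq_exp (φ := fun u => Real.exp (-u / 2) * G (s ^ 2 * u)) hε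
      (by simp [hG0]) hF (u := a / s ^ 2) (by positivity)
      (by rwa [div_lt_iff₀ (by positivity), mul_comm])
    simp only [mul_div_cancel₀ a (pow_ne_zero 2 hs.ne')] at this
    rw [mul_comm, ← eq_div_iff (Real.exp_ne_zero _), ← Real.exp_sub] at this
    rw [this]
    congr 1
    field_simp
    ring
  have hdeg : (laguerre n).natDegree = 0 :=
    natDegree_eq_zero_of_eval_eq_exp (δ := s ^ 2 * ε ^ 2) (by positivity) fun x hx hxε => by
      rw [eval_laguerre]
      exact eq_exp_of_tprod_comp_mul_geometric_eq_exp (sq_nonneg c) hc2.le hmul hG hx hxε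
  have := coeff_eq_zero_of_natDegree_lt (hdeg ▸ one_pos : (laguerre n).natDegree < 1)
  rw [coeff_one_laguerre, neg_eq_zero, Nat.cast_eq_zero] at this
  omega
end

section
/- Let χ : ℂ → ℂ satisfy assumptions (A1) and (A2) with data (μ, ν, c₀, C). Then for every z ∈ ℂ there exist λ₀ > 0 and a constant C(z) ≥ 0 such that for all 0 < λ < λ₀, writing s = sin λ and c = cos λ, the series ∑_{k=0}^{∞} log χ(s·c^k·z) converges and ∑_{k=0}^{∞} log χ(s·c^k·z) = (s/(1−c))·μ(z) + ½·(ν(z) − μ(z)²) + t(λ, z), where the remainder satisfies |t(λ, z)| ≤ C(z)·λ. -/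
open Filter Topology

/-- Assumption (A2) on `χ : ℂ → ℂ` with data `(μ, ν, c₀, C)`: `μ` and `ν` are
real-homogeneous of degrees 1 and 2 respectively, and
`χ z = 1 + μ z + ½ ν z + R z` with `‖R z‖ ≤ C ‖z‖³` for `‖z‖ < c₀`. -/
structure AssumptionA2 (χ : ℂ → ℂ) (μ ν : ℂ → ℂ) (c₀ C : ℝ) where
  c₀_pos : 0 < c₀
  C_nonneg : 0 ≤ C
  μ_hom : ∀ (t : ℝ) (z : ℂ), μ ((t : ℂ) * z) = (t : ℂ) * μ z
  ν_hom : ∀ (t : ℝ) (z : ℂ), ν ((t : ℂ) * z) = (t : ℂ) ^ 2 * ν z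
  expansion : ∀ z : ℂ, ‖z‖ < c₀ → ‖χ z - 1 - μ z - (1 / 2 : ℂ) * ν z‖ ≤ C * ‖z‖ ^ 3

/-!
Along a ray, (A2) gives `χ (a z) = 1 + a μ z + a² ν z / 2 + O(a³)`, hence
`log χ (a z) = a μ z + a² (ν z - (μ z)²) / 2 + O(a³)`. For `a_k = sin λ cos^k λ` one has
`∑ a_k = sin λ / (1 - cos λ)` and `∑ a_k² = sin² λ / (1 - cos² λ) = 1`, while the cubic errors sum
to at most `(sup_k a_k) ∑ a_k² ≤ λ`.
-/

theorem Complex.norm_log_one_add_sub_quadratic_le {u : ℂ} (hu : ‖u‖ ≤ 1 / 2) :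
    ‖log (1 + u) - (u - u ^ 2 / 2)‖ ≤ ‖u‖ ^ 3 := by
  have hu₁ : ‖u‖ < 1 := hu.trans_lt (by norm_num)
  have htaylor : logTaylor 3 u = u - u ^ 2 / 2 := by
    simp [logTaylor_succ, logTaylor_zero]
    ring
  have hinv : (1 - ‖u‖)⁻¹ ≤ 2 := by
    rw [inv_le_comm₀ (by linarith) two_pos]
    linarith
  calc ‖log (1 + u) - (u - u ^ 2 / 2)‖ ≤ ‖u‖ ^ (2 + 1) * (1 - ‖u‖)⁻¹ / (2 + 1) := by
        simpa [htaylor] using norm_log_sub_logTaylor_le 2 hu₁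
    _ = ‖u‖ ^ 3 * (1 - ‖u‖)⁻¹ / 3 := by norm_num
    _ ≤ ‖u‖ ^ 3 * 2 / 3 := by gcongr
    _ ≤ ‖u‖ ^ 3 := by linarith [pow_nonneg (norm_nonneg u) 3]

/-- If `u ≈ p + q` with `p` of first and `q` of second order, then
`log (1 + u) ≈ p + q - p² / 2`. -/
theorem Complex.norm_log_one_add_sub_le {u p q : ℂ} (hu : ‖u‖ ≤ 1 / 2) :
    ‖log (1 + u) - (p + q - p ^ 2 / 2)‖ ≤
      ‖u‖ ^ 3 + ‖u - (p + q)‖ + ‖p - u‖ * ‖p + u‖ / 2 := by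
  have hsplit : log (1 + u) - (p + q - p ^ 2 / 2) =
      (log (1 + u) - (u - u ^ 2 / 2)) + (u - (p + q)) + (p - u) * (p + u) / 2 := by
    ring
  rw [hsplit]
  refine norm_add₃_le.trans ?_
  rw [norm_div, norm_mul, Complex.norm_two]
  gcongr
  exact norm_log_one_add_sub_quadratic_le hu

theorem HasSum.summable_and_norm_tsum_sub_le {ι E : Type*} [NormedAddCommGroup E]
    [CompleteSpace E] {f g : ι → E} {b : ι → ℝ} {x : E} {B : ℝ} (hg : HasSum g x)
    (hb : HasSum b B) (hfg : ∀ i, ‖f i - g i‖ ≤ b i) :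
    Summable f ∧ ‖∑' i, f i - x‖ ≤ B := by
  have hdiff : Summable fun i => f i - g i := .of_norm_bounded hb.summable hfg
  have hf : Summable f := by simpa using hdiff.add hg.summable
  refine ⟨hf, ?_⟩
  rw [← hg.tsum_eq, ← hf.tsum_sub hg.summable]
  exact tsum_of_norm_bounded hb hfg

namespace Real

theorem abs_cos_lt_one_of_sin_ne_zero {x : ℝ} (hx : sin x ≠ 0) : |cos x| < 1 := by
  rw [← sq_lt_one_iff_abs_lt_one, cos_sq']
  linarith [pow_pos (abs_pos.2 hx) 2, sq_abs (sin x)]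

theorem hasSum_sin_mul_cos_pow {x : ℝ} (hx : sin x ≠ 0) :
    HasSum (fun k : ℕ => sin x * cos x ^ k) (sin x / (1 - cos x)) := by
  simpa [div_eq_mul_inv] using
    (hasSum_geometric_of_abs_lt_one (abs_cos_lt_one_of_sin_ne_zero hx)).mul_left (sin x)

theorem hasSum_sin_mul_cos_pow_sq {x : ℝ} (hx : sin x ≠ 0) :
    HasSum (fun k : ℕ => (sin x * cos x ^ k) ^ 2) 1 := by
  have hcos : |cos x ^ 2| < 1 := by
    rw [abs_pow, pow_lt_one_iff_of_nonneg (abs_nonneg _) two_ne_zero]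
    exact abs_cos_lt_one_of_sin_ne_zero hx
  have hsum := (hasSum_geometric_of_abs_lt_one hcos).mul_left (sin x ^ 2)
  rw [← sin_sq, mul_inv_cancel₀ (pow_ne_zero 2 hx)] at hsum
  simpa only [mul_pow, ← pow_mul, mul_comm _ 2] using hsum

theorem sin_mul_cos_pow_nonneg {x : ℝ} (hx₀ : 0 ≤ x) (hx : x ≤ π / 2) (k : ℕ) :
    0 ≤ sin x * cos x ^ k :=
  mul_nonneg (sin_nonneg_of_nonneg_of_le_pi hx₀ (by linarith [pi_pos]))
    (pow_nonneg (cos_nonneg_of_neg_pi_div_two_le_of_le (by linarith [pi_pos]) hx) k)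

theorem sin_mul_cos_pow_le {x : ℝ} (hx₀ : 0 ≤ x) (hx : x ≤ π / 2) (k : ℕ) :
    sin x * cos x ^ k ≤ x :=
  (mul_le_of_le_one_right (sin_nonneg_of_nonneg_of_le_pi hx₀ (by linarith [pi_pos]))
    (pow_le_one₀ (cos_nonneg_of_neg_pi_div_two_le_of_le (by linarith [pi_pos]) hx)
      (cos_le_one x))).trans (sin_le hx₀)

end Real

namespace AssumptionA2

open Complex

variable {χ μ ν : ℂ → ℂ} {c₀ C : ℝ}

theorem norm_log_sub_le (hA2 : AssumptionA2 χ μ ν c₀ C) {z : ℂ} {M a : ℝ}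
    (hM : ‖μ z‖ + ‖ν z‖ + C * ‖z‖ ^ 3 ≤ M) (ha₀ : 0 ≤ a) (ha₁ : a ≤ 1)
    (hac : a * ‖z‖ < c₀) (haM : 2 * a * M ≤ 1) :
    ‖log (χ (a * z)) - (a * μ z + (a : ℂ) ^ 2 * (1 / 2 * (ν z - μ z ^ 2)))‖ ≤
      (M ^ 3 + M ^ 2 + M) * a ^ 3 := by
  set u := χ (a * z) - 1
  set p : ℂ := a * μ z
  set q : ℂ := (a : ℂ) ^ 2 * (1 / 2 * ν z)
  have hnorm_az : ‖(a : ℂ) * z‖ = a * ‖z‖ := by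
    rw [norm_mul, norm_real, Real.norm_of_nonneg ha₀]
  have hp : ‖p‖ = a * ‖μ z‖ := by
    rw [norm_mul, norm_real, Real.norm_of_nonneg ha₀]
  have hq : ‖q‖ = a ^ 2 * (‖ν z‖ / 2) := by
    simp [q, norm_pow, norm_real, Real.norm_of_nonneg ha₀, div_eq_inv_mul]
  have herr : ‖u - (p + q)‖ ≤ C * ‖z‖ ^ 3 * a ^ 3 := by
    have h := hA2.expansion (a * z) (hnorm_az ▸ hac)
    rw [hA2.μ_hom, hA2.ν_hom, hnorm_az] at h
    calc ‖u - (p + q)‖ = ‖χ (a * z) - 1 - a * μ z - 1 / 2 * (a ^ 2 * ν z)‖ := by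
          congr 1; ring
      _ ≤ C * (a * ‖z‖) ^ 3 := h
      _ = C * ‖z‖ ^ 3 * a ^ 3 := by ring
  have hC : 0 ≤ C * ‖z‖ ^ 3 := mul_nonneg hA2.C_nonneg (by positivity)
  have ha₂ : a ^ 2 ≤ a := by nlinarith
  have ha₃ : a ^ 3 ≤ a ^ 2 := by nlinarith
  have hM₀ : 0 ≤ M := by linarith [norm_nonneg (μ z), norm_nonneg (ν z)]
  have hp_sub_u : ‖p - u‖ ≤ a ^ 2 * (‖ν z‖ + C * ‖z‖ ^ 3) := by
    calc ‖p - u‖ = ‖(u - (p + q)) + q‖ := by rw [← norm_neg]; congr 1; ring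
      _ ≤ ‖u - (p + q)‖ + ‖q‖ := norm_add_le _ _
      _ ≤ a ^ 2 * (‖ν z‖ + C * ‖z‖ ^ 3) := by
          rw [hq]
          nlinarith [mul_le_mul_of_nonneg_left ha₃ hC, norm_nonneg (ν z)]
  have hu : ‖u‖ ≤ a * M := by
    calc ‖u‖ ≤ ‖p‖ + ‖p - u‖ := by simpa using norm_sub_le p (p - u)
      _ ≤ a * M := by
          rw [hp]
          nlinarith [mul_le_mul_of_nonneg_right ha₂ (add_nonneg (norm_nonneg (ν z)) hC)]
  have hexpand : p + q - p ^ 2 / 2 = a * μ z + (a : ℂ) ^ 2 * (1 / 2 * (ν z - μ z ^ 2)) := by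
    ring
  rw [show χ (a * z) = 1 + u by ring, ← hexpand]
  refine (norm_log_one_add_sub_le (by nlinarith)).trans ?_
  have hp_add_u : ‖p + u‖ ≤ 2 * (a * M) := by
    refine (norm_add_le _ _).trans ?_
    rw [hp]
    nlinarith [norm_nonneg (ν z)]
  calc ‖u‖ ^ 3 + ‖u - (p + q)‖ + ‖p - u‖ * ‖p + u‖ / 2
      ≤ (a * M) ^ 3 + M * a ^ 3 + a ^ 2 * M * (2 * (a * M)) / 2 := by
        gcongr
        · exact herr.trans (by gcongr; linarith [norm_nonneg (μ z), norm_nonneg (ν z)])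
        · exact hp_sub_u.trans (by gcongr; linarith [norm_nonneg (μ z)])
    _ = (M ^ 3 + M ^ 2 + M) * a ^ 3 := by ring

theorem summable_and_norm_tsum_log_sub_le (hA2 : AssumptionA2 χ μ ν c₀ C) {z : ℂ}
    {M r A A₂ : ℝ} (a : ℕ → ℝ) (hM : ‖μ z‖ + ‖ν z‖ + C * ‖z‖ ^ 3 ≤ M)
    (ha₀ : ∀ k, 0 ≤ a k) (har : ∀ k, a k ≤ r) (hr₁ : r ≤ 1) (hrc : r * ‖z‖ < c₀)
    (hrM : 2 * r * M ≤ 1) (hA : HasSum a A) (hA₂ : HasSum (fun k => a k ^ 2) A₂) :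
    Summable (fun k => log (χ (a k * z))) ∧
      ‖∑' k, log (χ (a k * z)) - (A * μ z + A₂ * (1 / 2 * (ν z - μ z ^ 2)))‖ ≤
        (M ^ 3 + M ^ 2 + M) * r * A₂ := by
  have hM₀ : 0 ≤ M := by
    linarith [norm_nonneg (μ z), norm_nonneg (ν z),
      mul_nonneg hA2.C_nonneg (pow_nonneg (norm_nonneg z) 3)]
  have hmain : HasSum (fun k => (a k : ℂ) * μ z + (a k : ℂ) ^ 2 * (1 / 2 * (ν z - μ z ^ 2)))
      (A * μ z + A₂ * (1 / 2 * (ν z - μ z ^ 2))) := by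
    have hA₂' : HasSum (fun k => (a k : ℂ) ^ 2) A₂ := by exact_mod_cast hasSum_ofReal.2 hA₂
    exact ((hasSum_ofReal.2 hA).mul_right _).add (hA₂'.mul_right _)
  refine hmain.summable_and_norm_tsum_sub_le (hA₂.mul_left ((M ^ 3 + M ^ 2 + M) * r))
    fun k => ?_
  refine (hA2.norm_log_sub_le hM (ha₀ k) ((har k).trans hr₁)
    ((mul_le_mul_of_nonneg_right (har k) (norm_nonneg z)).trans_lt hrc)
    (le_trans (by gcongr; exact har k) hrM)).trans ?_
  calc (M ^ 3 + M ^ 2 + M) * a k ^ 3 = (M ^ 3 + M ^ 2 + M) * a k ^ 2 * a k := by ring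
    _ ≤ (M ^ 3 + M ^ 2 + M) * a k ^ 2 * r := by gcongr; exact har k
    _ = (M ^ 3 + M ^ 2 + M) * r * a k ^ 2 := by ring

end AssumptionA2

theorem statement9_general (χ : ℂ → ℂ) (μ ν : ℂ → ℂ) (c₀ C : ℝ)
    (hA2 : AssumptionA2 χ μ ν c₀ C) (z : ℂ) :
    ∃ lam₀ > (0 : ℝ), ∃ Cz : ℝ, 0 ≤ Cz ∧ ∀ lam : ℝ, 0 < lam → lam < lam₀ →
      Summable (fun k : ℕ =>
        Complex.log (χ (((Real.sin lam * Real.cos lam ^ k : ℝ) : ℂ) * z))) ∧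
      ‖(∑' k : ℕ,
          Complex.log (χ (((Real.sin lam * Real.cos lam ^ k : ℝ) : ℂ) * z))) -
        (((Real.sin lam / (1 - Real.cos lam) : ℝ) : ℂ) * μ z +
          (1 / 2 : ℂ) * (ν z - (μ z) ^ 2))‖ ≤ Cz * lam := by
  set M := ‖μ z‖ + ‖ν z‖ + C * ‖z‖ ^ 3
  have hM₀ : 0 ≤ M := by
    have := mul_nonneg hA2.C_nonneg (pow_nonneg (norm_nonneg z) 3)
    positivity
  refine ⟨min 1 (min (c₀ / (‖z‖ + 1)) (1 / (2 * M + 1))),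
    lt_min one_pos (lt_min (div_pos hA2.c₀_pos (by positivity)) (by positivity)),
    M ^ 3 + M ^ 2 + M, by positivity, fun lam hlam₀ hlam => ?_⟩
  obtain ⟨hlam₁, hlamc, hlamM⟩ : lam < 1 ∧ lam * (‖z‖ + 1) < c₀ ∧ lam * (2 * M + 1) < 1 := by
    simpa only [lt_min_iff, lt_div_iff₀ (by positivity : (0 : ℝ) < ‖z‖ + 1),
      lt_div_iff₀ (by positivity : (0 : ℝ) < 2 * M + 1)] using hlam
  have hlam_pi : lam ≤ Real.pi / 2 := by linarith [Real.pi_gt_three]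
  have hsin : Real.sin lam ≠ 0 :=
    (Real.sin_pos_of_pos_of_lt_pi hlam₀ (by linarith [Real.pi_gt_three])).ne'
  have key := hA2.summable_and_norm_tsum_log_sub_le _ le_rfl
    (Real.sin_mul_cos_pow_nonneg hlam₀.le hlam_pi) (Real.sin_mul_cos_pow_le hlam₀.le hlam_pi)
    hlam₁.le (by nlinarith) (by nlinarith) (Real.hasSum_sin_mul_cos_pow hsin)
    (Real.hasSum_sin_mul_cos_pow_sq hsin)
  rwa [Complex.ofReal_one, one_mul, mul_one] at key

/-- Proposition 3, weak-coupling expansion. If `χ` satisfies (A1) and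
(A2) with data `(μ, ν, c₀, C)`, then for every `z ∈ ℂ` there are `λ₀ > 0` and `C(z) ≥ 0`
such that for all `0 < λ < λ₀`, with `s = sin λ`, `c = cos λ`, the series
`∑_{k≥0} log χ(s c^k z)` converges and equals
`(s/(1−c)) μ(z) + ½ (ν(z) − μ(z)²) + t(λ,z)` with `|t(λ,z)| ≤ C(z) λ`. -/
theorem statement9 (χ : ℂ → ℂ) (μ ν : ℂ → ℂ) (c₀ C : ℝ)
    (hA1 : AssumptionA1 χ) (hA2 : AssumptionA2 χ μ ν c₀ C) (z : ℂ) :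
    ∃ lam₀ > (0 : ℝ), ∃ Cz : ℝ, 0 ≤ Cz ∧ ∀ lam : ℝ, 0 < lam → lam < lam₀ →
      Summable (fun k : ℕ =>
        Complex.log (χ (((Real.sin lam * Real.cos lam ^ k : ℝ) : ℂ) * z))) ∧
      ‖(∑' k : ℕ,
          Complex.log (χ (((Real.sin lam * Real.cos lam ^ k : ℝ) : ℂ) * z))) -
        (((Real.sin lam / (1 - Real.cos lam) : ℝ) : ℂ) * μ z +
          (1 / 2 : ℂ) * (ν z - (μ z) ^ 2))‖ ≤ Cz * lam :=
  statement9_general χ μ ν c₀ C hA2 z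
end

section
/- Let χ : ℂ → ℂ satisfy assumptions (A1) and (A2) with data (μ, ν, c₀, C), and suppose μ(z) = 0 for all z ∈ ℂ. Then for every z ∈ ℂ, lim_{λ→0⁺} ∏_{k=0}^{∞} χ(sin λ·(cos λ)^k·z) = exp( ½·ν(z) ). -/
/-!
With `s = sin λ` and `c = cos λ`, the weights `σₖ = s cᵏ` satisfy `0 ≤ σₖ ≤ s` and
`∑ σₖ² = s² / (1 - c²) = 1`. By (A2) with `μ = 0`, `χ (σₖ z) - 1 = σₖ² T + O(σₖ³)` where
`T = ν z / 2`, so `∑ (χ (σₖ z) - 1) = T + O(∑ σₖ³) = T + O(s)` and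
`∑ ‖χ (σₖ z) - 1‖² = O(∑ σₖ⁴) = O(s²)`. Writing the product as `exp (∑ log χ (σₖ z))` and
using `‖log (1 + w) - w‖ ≤ ‖w‖²` for `‖w‖ ≤ 1/2`, the exponent is `T + O(s)`, and `s → 0`
as `λ → 0⁺`.
-/

open Filter Topology

namespace Complex

variable {ι : Type*}

lemma norm_log_one_add_sub_self_le_sq {w : ℂ} (hw : ‖w‖ ≤ 1 / 2) :
    ‖log (1 + w) - w‖ ≤ ‖w‖ ^ 2 := by
  have hinv : (1 - ‖w‖)⁻¹ ≤ 2 := by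
    rw [inv_le_comm₀ (by linarith) two_pos]
    linarith
  calc ‖log (1 + w) - w‖ ≤ ‖w‖ ^ 2 * (1 - ‖w‖)⁻¹ / 2 :=
        norm_log_one_add_sub_self_le (hw.trans_lt one_half_lt_one)
    _ ≤ ‖w‖ ^ 2 * 2 / 2 := by gcongr
    _ = ‖w‖ ^ 2 := by ring

lemma exists_hasProd_exp_norm_sub_tsum_le {f : ι → ℂ} (hf : ∀ k, ‖f k - 1‖ ≤ 1 / 2)
    (hs : Summable fun k => ‖f k - 1‖) :
    ∃ S, HasProd f (exp S) ∧ ‖S - ∑' k, (f k - 1)‖ ≤ ∑' k, ‖f k - 1‖ ^ 2 := by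
  have hlog : Summable fun k => log (1 + (f k - 1)) :=
    summable_log_one_add_of_summable hs.of_norm
  have hf0 : ∀ k, f k ≠ 0 := fun k hk => by
    have := hf k
    rw [hk, zero_sub, norm_neg, norm_one] at this
    norm_num at this
  have hsq : HasSum (fun k => ‖f k - 1‖ ^ 2) (∑' k, ‖f k - 1‖ ^ 2) :=
    (hs.of_nonneg_of_le (fun _ => by positivity) fun k => by
      nlinarith [hf k, norm_nonneg (f k - 1)]).hasSum
  refine ⟨∑' k, log (1 + (f k - 1)), ?_, ?_⟩
  · exact hasProd_of_hasSum_log hf0 (by simpa only [add_sub_cancel] using hlog.hasSum)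
  · rw [← hlog.tsum_sub hs.of_norm]
    exact tsum_of_norm_bounded hsq fun k => norm_log_one_add_sub_self_le_sq (hf k)

end Complex

section SquareSummableWeights

variable {ι : Type*} {σ : ι → ℝ} {s : ℝ}

lemma summable_pow_add_two_of_le (hσ : ∀ k, 0 ≤ σ k ∧ σ k ≤ s)
    (hσ2 : Summable fun k => σ k ^ 2) (n : ℕ) : Summable fun k => σ k ^ (n + 2) :=
  (hσ2.mul_left (s ^ n)).of_nonneg_of_le (fun k => pow_nonneg (hσ k).1 _) fun k => by
    rw [pow_add]
    gcongr
    exacts [(hσ k).1, (hσ k).2]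

lemma tsum_pow_add_two_le (hσ : ∀ k, 0 ≤ σ k ∧ σ k ≤ s)
    (hσ2 : HasSum (fun k => σ k ^ 2) 1) (n : ℕ) : ∑' k, σ k ^ (n + 2) ≤ s ^ n := by
  calc ∑' k, σ k ^ (n + 2) ≤ ∑' k, s ^ n * σ k ^ 2 :=
        (summable_pow_add_two_of_le hσ hσ2.summable n).tsum_le_tsum (fun k => by
          rw [pow_add]
          gcongr
          exacts [(hσ k).1, (hσ k).2]) (hσ2.summable.mul_left _)
    _ = s ^ n := by rw [tsum_mul_left, hσ2.tsum_eq, mul_one]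

variable {f : ι → ℂ} {D : ℝ} {T : ℂ}

lemma norm_tsum_sub_one_sub_le (hσ : ∀ k, 0 ≤ σ k ∧ σ k ≤ s)
    (hσ2 : HasSum (fun k => σ k ^ 2) 1)
    (hf : ∀ k, ‖f k - 1 - (σ k : ℂ) ^ 2 * T‖ ≤ D * σ k ^ 3) (hD : 0 ≤ D) :
    ‖∑' k, (f k - 1) - T‖ ≤ D * s := by
  have hT : HasSum (fun k => (σ k : ℂ) ^ 2 * T) T := by
    simpa using (hσ2.mapL Complex.ofRealCLM).mul_right T
  have hR : Summable fun k => f k - 1 - (σ k : ℂ) ^ 2 * T :=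
    Summable.of_norm_bounded ((summable_pow_add_two_of_le hσ hσ2.summable 1).mul_left D) hf
  have hsum : HasSum (fun k => f k - 1) (∑' k, (f k - 1 - (σ k : ℂ) ^ 2 * T) + T) := by
    simpa only [sub_add_cancel] using hR.hasSum.add hT
  calc ‖∑' k, (f k - 1) - T‖ = ‖∑' k, (f k - 1 - (σ k : ℂ) ^ 2 * T)‖ := by
        rw [hsum.tsum_eq, add_sub_cancel_right]
    _ ≤ ∑' k, D * σ k ^ 3 :=
        tsum_of_norm_bounded ((summable_pow_add_two_of_le hσ hσ2.summable 1).mul_left D).hasSum hf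
    _ ≤ D * s := by
        rw [tsum_mul_left]
        simpa using mul_le_mul_of_nonneg_left (tsum_pow_add_two_le hσ hσ2 1) hD

lemma exists_hasProd_exp_norm_sub_le (hσ : ∀ k, 0 ≤ σ k ∧ σ k ≤ s)
    (hσ2 : HasSum (fun k => σ k ^ 2) 1)
    (hf : ∀ k, ‖f k - 1 - (σ k : ℂ) ^ 2 * T‖ ≤ D * σ k ^ 3) (hD : 0 ≤ D)
    (hsmall : (‖T‖ + D * s) * s ^ 2 ≤ 1 / 2) :
    ∃ S, HasProd f (Complex.exp S) ∧ ‖S - T‖ ≤ (‖T‖ + D * s) ^ 2 * s ^ 2 + D * s := by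
  have hle : ∀ k, ‖f k - 1‖ ≤ ‖T‖ * σ k ^ 2 + D * σ k ^ 3 := fun k => by
    have := norm_add_le (f k - 1 - (σ k : ℂ) ^ 2 * T) ((σ k : ℂ) ^ 2 * T)
    rw [sub_add_cancel, norm_mul, norm_pow, Complex.norm_real, Real.norm_eq_abs,
      sq_abs] at this
    linarith [hf k]
  have hquad : ∀ k, ‖f k - 1‖ ≤ (‖T‖ + D * s) * σ k ^ 2 := fun k => by
    have : σ k ^ 3 ≤ s * σ k ^ 2 := by
      rw [pow_succ, mul_comm]
      exact mul_le_mul_of_nonneg_right (hσ k).2 (sq_nonneg _)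
    nlinarith [hle k]
  have hhalf : ∀ k, ‖f k - 1‖ ≤ 1 / 2 := fun k => by
    have h2 : σ k ^ 2 ≤ s ^ 2 := pow_le_pow_left₀ (hσ k).1 (hσ k).2 2
    have h3 : σ k ^ 3 ≤ s ^ 3 := pow_le_pow_left₀ (hσ k).1 (hσ k).2 3
    nlinarith [hle k, norm_nonneg T]
  have hsum : Summable fun k => ‖f k - 1‖ :=
    (hσ2.summable.mul_left _).of_nonneg_of_le (fun _ => norm_nonneg _) hquad
  obtain ⟨S, hprod, hlog⟩ := Complex.exists_hasProd_exp_norm_sub_tsum_le hhalf hsum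
  have hsq : ∑' k, ‖f k - 1‖ ^ 2 ≤ (‖T‖ + D * s) ^ 2 * s ^ 2 := by
    have hquad2 : ∀ k, ‖f k - 1‖ ^ 2 ≤ (‖T‖ + D * s) ^ 2 * σ k ^ (2 + 2) := fun k => by
      calc ‖f k - 1‖ ^ 2 ≤ ((‖T‖ + D * s) * σ k ^ 2) ^ 2 :=
            pow_le_pow_left₀ (norm_nonneg _) (hquad k) 2
        _ = (‖T‖ + D * s) ^ 2 * σ k ^ (2 + 2) := by ring
    have hsum4 := (summable_pow_add_two_of_le hσ hσ2.summable 2).mul_left ((‖T‖ + D * s) ^ 2)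
    calc ∑' k, ‖f k - 1‖ ^ 2 ≤ ∑' k, (‖T‖ + D * s) ^ 2 * σ k ^ (2 + 2) :=
          (hsum4.of_nonneg_of_le (fun _ => by positivity) hquad2).tsum_le_tsum hquad2 hsum4
      _ ≤ (‖T‖ + D * s) ^ 2 * s ^ 2 := by
          rw [tsum_mul_left]
          exact mul_le_mul_of_nonneg_left (tsum_pow_add_two_le hσ hσ2 2) (sq_nonneg _)
  refine ⟨S, hprod, ?_⟩
  calc ‖S - T‖ ≤ ‖S - ∑' k, (f k - 1)‖ + ‖∑' k, (f k - 1) - T‖ :=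
        norm_sub_le_norm_sub_add_norm_sub _ _ _
    _ ≤ (‖T‖ + D * s) ^ 2 * s ^ 2 + D * s :=
        add_le_add (hlog.trans hsq) (norm_tsum_sub_one_sub_le hσ hσ2 hf hD)

end SquareSummableWeights

lemma hasSum_sq_sin_mul_cos_pow {x : ℝ} (hx : Real.sin x ≠ 0) :
    HasSum (fun k : ℕ => (Real.sin x * Real.cos x ^ k) ^ 2) 1 := by
  have hcos : Real.cos x ^ 2 < 1 := by
    have : 0 < Real.sin x ^ 2 := by positivity
    linarith [Real.sin_sq_add_cos_sq x]
  have h := (hasSum_geometric_of_lt_one (sq_nonneg _) hcos).mul_left (Real.sin x ^ 2)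
  rw [← Real.sin_sq, mul_inv_cancel₀ (pow_ne_zero 2 hx)] at h
  simpa only [mul_pow, ← pow_mul, mul_comm 2] using h

lemma sin_mul_cos_pow_mem_Icc {x : ℝ} (hx₀ : 0 ≤ x) (hx : x ≤ Real.pi / 2) (k : ℕ) :
    0 ≤ Real.sin x * Real.cos x ^ k ∧ Real.sin x * Real.cos x ^ k ≤ Real.sin x := by
  have hsin : 0 ≤ Real.sin x := Real.sin_nonneg_of_nonneg_of_le_pi hx₀ (by linarith [Real.pi_pos])
  have hcos : 0 ≤ Real.cos x := Real.cos_nonneg_of_mem_Icc ⟨by linarith [Real.pi_pos], hx⟩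
  exact ⟨by positivity, mul_le_of_le_one_right hsin (pow_le_one₀ hcos (Real.cos_le_one x))⟩

lemma AssumptionA2.norm_sub_sq_mul_le {χ μ ν : ℂ → ℂ} {c₀ C : ℝ}
    (hA2 : AssumptionA2 χ μ ν c₀ C) (hμ : ∀ z, μ z = 0) {t : ℝ} {z : ℂ}
    (ht : |t| * ‖z‖ < c₀) :
    ‖χ (t * z) - 1 - (t : ℂ) ^ 2 * ((1 / 2) * ν z)‖ ≤ C * ‖z‖ ^ 3 * |t| ^ 3 := by
  have hnorm : ‖(t : ℂ) * z‖ = |t| * ‖z‖ := by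
    rw [norm_mul, Complex.norm_real, Real.norm_eq_abs]
  have := hA2.expansion (t * z) (hnorm ▸ ht)
  rw [hμ, hA2.ν_hom, hnorm] at this
  calc _ = ‖χ (t * z) - 1 - 0 - 1 / 2 * ((t : ℂ) ^ 2 * ν z)‖ := by ring_nf
    _ ≤ _ := this
    _ = _ := by ring

theorem statement10_general (χ : ℂ → ℂ) (μ ν : ℂ → ℂ) (c₀ C : ℝ)
    (hA2 : AssumptionA2 χ μ ν c₀ C)
    (hμ : ∀ z : ℂ, μ z = 0) (z : ℂ) :
    ∀ ε > (0 : ℝ), ∃ lam₀ > (0 : ℝ), ∀ lam : ℝ, 0 < lam → lam < lam₀ →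
      ∃ F : ℂ,
        Tendsto (fun K : ℕ => ∏ k ∈ Finset.range K,
            χ (((Real.sin lam * Real.cos lam ^ k : ℝ) : ℂ) * z)) atTop (𝓝 F) ∧
        ‖F - Complex.exp ((1 / 2 : ℂ) * ν z)‖ < ε := by
  intro ε hε
  set T : ℂ := (1 / 2 : ℂ) * ν z
  set D : ℝ := C * ‖z‖ ^ 3
  have hD : 0 ≤ D := mul_nonneg hA2.C_nonneg (by positivity)
  obtain ⟨δ, hδ, hexp⟩ :=
    Metric.continuousAt_iff.mp (Complex.continuous_exp.continuousAt (x := T)) ε hε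
  have hsmall : ∀ᶠ x in 𝓝 (0 : ℝ), x * ‖z‖ < c₀ ∧ (‖T‖ + D * x) * x ^ 2 < 1 / 2 ∧
      (‖T‖ + D * x) ^ 2 * x ^ 2 + D * x < δ := by
    refine .and ?_ (.and ?_ ?_) <;>
      exact ContinuousAt.eventually_lt (by fun_prop) continuousAt_const
        (by simp [hA2.c₀_pos, hδ])
  obtain ⟨r, hr, hr_small⟩ := Metric.eventually_nhds_iff.mp hsmall
  refine ⟨min r 1, lt_min hr one_pos, fun lam hlam hlam₀ => ?_⟩
  have hlam_pi : lam ≤ Real.pi / 2 := by linarith [min_le_right r 1, Real.pi_gt_three]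
  have hsin_pos : 0 < Real.sin lam :=
    Real.sin_pos_of_pos_of_lt_pi hlam (by linarith [Real.pi_gt_three])
  have hsin_lt : Real.sin lam < r :=
    (Real.sin_le hlam.le).trans_lt (hlam₀.trans_le (min_le_left _ _))
  obtain ⟨hc₀, hhalf, hδ'⟩ := hr_small (by rwa [Real.dist_eq, sub_zero, abs_of_pos hsin_pos])
  have hσ := sin_mul_cos_pow_mem_Icc hlam.le hlam_pi
  have hχ (k : ℕ) := hA2.norm_sub_sq_mul_le hμ (t := Real.sin lam * Real.cos lam ^ k) (z := z)
    (by rw [abs_of_nonneg (hσ k).1]; nlinarith [(hσ k).2, norm_nonneg z])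
  simp only [abs_of_nonneg (hσ _).1] at hχ
  obtain ⟨S, hprod, hST⟩ := exists_hasProd_exp_norm_sub_le hσ
    (hasSum_sq_sin_mul_cos_pow hsin_pos.ne') hχ hD hhalf.le
  refine ⟨_, hprod.tendsto_prod_nat, ?_⟩
  rw [← dist_eq_norm]
  exact hexp (by rw [dist_eq_norm]; exact hST.trans_lt hδ')

/-- approach to equilibrium, centered case. If `χ` satisfies (A1) and
(A2) with data `(μ, ν, c₀, C)` and `μ ≡ 0`, then for every `z ∈ ℂ`,
`lim_{λ→0⁺} ∏_{k≥0} χ(sin λ (cos λ)^k z) = exp(½ ν z)`; the double limit is expressed by: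
for every `ε > 0` there is `λ₀ > 0` such that for all `0 < λ < λ₀` the infinite product
converges and its value is within `ε` of `exp(½ ν z)`. -/
theorem statement10 (χ : ℂ → ℂ) (μ ν : ℂ → ℂ) (c₀ C : ℝ)
    (hA1 : AssumptionA1 χ) (hA2 : AssumptionA2 χ μ ν c₀ C)
    (hμ : ∀ z : ℂ, μ z = 0) (z : ℂ) :
    ∀ ε > (0 : ℝ), ∃ lam₀ > (0 : ℝ), ∀ lam : ℝ, 0 < lam → lam < lam₀ →
      ∃ F : ℂ,
        Tendsto (fun K : ℕ => ∏ k ∈ Finset.range K,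
            χ (((Real.sin lam * Real.cos lam ^ k : ℝ) : ℂ) * z)) atTop (𝓝 F) ∧
        ‖F - Complex.exp ((1 / 2 : ℂ) * ν z)‖ < ε :=
  statement10_general χ μ ν c₀ C hA2 hμ z
end

section
/- Let χ : ℂ → ℂ satisfy assumptions (A1) and (A2) with data (μ, ν, c₀, C). Then for every z ∈ ℂ there exist λ₀ > 0 and a constant C(z) ≥ 0 such that for all 0 < λ ≤ λ₀, writing s = sin λ and c = cos λ, one has for every integer k ≥ 0: | log χ(s·c^k·z) − s·c^k·μ(z) − ½·s²·c^{2k}·(ν(z) − μ(z)²) | ≤ s³·c^{3k}·C(z), where log is the principal branch of the complex logarithm. -/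
open Filter Topology

/-!
Along the ray `t ↦ t z`, (A2) says `u t := χ (t z) - 1 = t μ(z) + ½ t² ν(z) + O(t³)`. Since
`log (1 + u) = u - u²/2 + O(u³)` and `u² = t² μ(z)² + O(t³)`, the second-order cumulant expansion
`log χ (t z) = t μ(z) + ½ t² (ν(z) - μ(z)²) + O(t³)` holds on a neighbourhood of `t = 0`.
For `0 < λ ≤ 1` every `t = sin λ · cos^k λ` lies in `[0, λ]`, so one constant serves all `k`.
-/

open Asymptotics Complex
open scoped Real

theorem Complex.logTaylor_three (u : ℂ) : logTaylor 3 u = u - u ^ 2 / 2 := by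
  simp only [logTaylor_succ, logTaylor_zero]
  norm_num
  ring

theorem Complex.isBigO_log_one_add_sub_cumulants {α : Type*} {l : Filter α} {t u : α → ℂ}
    {a b : ℂ} (ht : Tendsto t l (𝓝 0))
    (hu : (fun x ↦ u x - (t x * a + 1 / 2 * t x ^ 2 * b)) =O[l] fun x ↦ t x ^ 3) :
    (fun x ↦ log (1 + u x) - t x * a - 1 / 2 * t x ^ 2 * (b - a ^ 2)) =O[l]
      fun x ↦ t x ^ 3 := by
  have hpow {m n : ℕ} (hmn : m < n) : (fun x ↦ t x ^ n) =O[l] fun x ↦ t x ^ m :=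
    ((isLittleO_pow_pow hmn).comp_tendsto ht).isBigO
  have hlin : (fun x ↦ u x - t x * a) =O[l] fun x ↦ t x ^ 2 := by
    have h := (hu.trans (hpow (by norm_num : 2 < 3))).add
      ((isBigO_refl (fun x ↦ t x ^ 2) l).const_mul_left (1 / 2 * b))
    refine h.congr_left fun x ↦ ?_
    ring
  have hu_lin : u =O[l] t := by
    have h := (hlin.trans ((hpow (by norm_num : 1 < 2)).congr_right fun x ↦ pow_one (t x))).add
      ((isBigO_refl t l).const_mul_left a)
    refine h.congr_left fun x ↦ ?_
    ring
  have hlog : (fun x ↦ log (1 + u x) - logTaylor 3 (u x)) =O[l] fun x ↦ t x ^ 3 :=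
    ((log_sub_logTaylor_isBigO 2).comp_tendsto (hu_lin.trans_tendsto ht)).trans (hu_lin.pow 3)
  -- `u² - (t a)² = (u - t a) (u + t a)` is `O(t²) · O(t)`.
  have hsq : (fun x ↦ u x ^ 2 - (t x * a) ^ 2) =O[l] fun x ↦ t x ^ 3 := by
    have h := hlin.mul (hu_lin.add ((isBigO_refl t l).const_mul_left a))
    refine (h.congr (fun x ↦ ?_) fun x ↦ ?_) <;> ring
  refine ((hlog.add hu).sub (hsq.const_mul_left (1 / 2))).congr_left fun x ↦ ?_
  rw [logTaylor_three]
  ring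

theorem AssumptionA2.isBigO_expansion {χ μ ν : ℂ → ℂ} {c₀ C : ℝ}
    (hA2 : AssumptionA2 χ μ ν c₀ C) (z : ℂ) :
    (fun x : ℝ ↦ χ (x * z) - 1 - (x * μ z + 1 / 2 * (x : ℂ) ^ 2 * ν z)) =O[𝓝 0]
      fun x ↦ (x : ℂ) ^ 3 := by
  have hsmall : ∀ᶠ x : ℝ in 𝓝 0, ‖(x : ℂ) * z‖ < c₀ := by
    have hcont : Continuous fun x : ℝ ↦ ‖(x : ℂ) * z‖ := by fun_prop
    exact hcont.continuousAt.eventually_lt continuousAt_const (by simpa using hA2.c₀_pos)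
  refine IsBigO.of_bound (C * ‖z‖ ^ 3) (hsmall.mono fun x hx ↦ ?_)
  have h := hA2.expansion _ hx
  rw [hA2.μ_hom, hA2.ν_hom] at h
  calc _ = ‖χ (x * z) - 1 - x * μ z - 1 / 2 * (x ^ 2 * ν z)‖ := by ring_nf
    _ ≤ C * ‖(x : ℂ) * z‖ ^ 3 := h
    _ = C * ‖z‖ ^ 3 * ‖(x : ℂ) ^ 3‖ := by rw [norm_mul, norm_pow]; ring

theorem Real.sin_mul_cos_pow_mem_Icc {x : ℝ} (hx : x ∈ Set.Icc 0 (π / 2)) (k : ℕ) :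
    sin x * cos x ^ k ∈ Set.Icc 0 x := by
  have hsin : 0 ≤ sin x := sin_nonneg_of_nonneg_of_le_pi hx.1 (by linarith [hx.2, pi_pos])
  have hcos : 0 ≤ cos x := cos_nonneg_of_mem_Icc ⟨by linarith [hx.1, pi_pos], hx.2⟩
  refine ⟨by positivity, ?_⟩
  calc sin x * cos x ^ k ≤ sin x := mul_le_of_le_one_right hsin (pow_le_one₀ hcos (cos_le_one x))
    _ ≤ x := sin_le hx.1

theorem statement13_general (χ : ℂ → ℂ) (μ ν : ℂ → ℂ) (c₀ C : ℝ)
    (hA2 : AssumptionA2 χ μ ν c₀ C) (z : ℂ) :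
    ∃ lam₀ > (0 : ℝ), ∃ Cz : ℝ, 0 ≤ Cz ∧
      ∀ lam : ℝ, 0 < lam → lam ≤ lam₀ → ∀ k : ℕ,
        ‖Complex.log (χ (((Real.sin lam * Real.cos lam ^ k : ℝ) : ℂ) * z)) -
            ((Real.sin lam * Real.cos lam ^ k : ℝ) : ℂ) * μ z -
            (1 / 2 : ℂ) * ((Real.sin lam ^ 2 * Real.cos lam ^ (2 * k) : ℝ) : ℂ) *
              (ν z - (μ z) ^ 2)‖ ≤
          Real.sin lam ^ 3 * Real.cos lam ^ (3 * k) * Cz := by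
  obtain ⟨Cz, hCz, hO⟩ := (isBigO_log_one_add_sub_cumulants
    (continuous_ofReal.tendsto' 0 0 ofReal_zero) (hA2.isBigO_expansion z)).exists_nonneg
  obtain ⟨ε, hε, hbound⟩ := Metric.eventually_nhds_iff.1 hO.bound
  refine ⟨min 1 (ε / 2), by positivity, Cz, hCz, fun lam hlam hlam₀ k ↦ ?_⟩
  have hlam1 : lam ≤ 1 := hlam₀.trans (min_le_left _ _)
  set t := Real.sin lam * Real.cos lam ^ k
  have ht : t ∈ Set.Icc 0 lam :=
    Real.sin_mul_cos_pow_mem_Icc ⟨hlam.le, by linarith [Real.pi_gt_three]⟩ k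
  have htε : dist t 0 < ε := by
    rw [Real.dist_0_eq_abs, abs_of_nonneg ht.1]
    linarith [ht.2, min_le_right 1 (ε / 2)]
  have ht2 : Real.sin lam ^ 2 * Real.cos lam ^ (2 * k) = t ^ 2 := by rw [pow_mul', ← mul_pow]
  have ht3 : Real.sin lam ^ 3 * Real.cos lam ^ (3 * k) = t ^ 3 := by rw [pow_mul', ← mul_pow]
  rw [ht2, ht3, mul_comm _ Cz]
  push_cast
  simpa [abs_of_nonneg ht.1] using hbound htε

/-- per-term estimate, Eq. (36). If `χ` satisfies (A1) and (A2) with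
data `(μ, ν, c₀, C)`, then for every `z ∈ ℂ` there are `λ₀ > 0` and `C(z) ≥ 0` such that
for all `0 < λ ≤ λ₀`, `s = sin λ`, `c = cos λ`, and every `k ≥ 0`:
`|log χ(s c^k z) − s c^k μ(z) − ½ s² c^{2k} (ν(z) − μ(z)²)| ≤ s³ c^{3k} C(z)`. -/
theorem statement13 (χ : ℂ → ℂ) (μ ν : ℂ → ℂ) (c₀ C : ℝ)
    (hA1 : AssumptionA1 χ) (hA2 : AssumptionA2 χ μ ν c₀ C) (z : ℂ) :
    ∃ lam₀ > (0 : ℝ), ∃ Cz : ℝ, 0 ≤ Cz ∧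
      ∀ lam : ℝ, 0 < lam → lam ≤ lam₀ → ∀ k : ℕ,
        ‖Complex.log (χ (((Real.sin lam * Real.cos lam ^ k : ℝ) : ℂ) * z)) -
            ((Real.sin lam * Real.cos lam ^ k : ℝ) : ℂ) * μ z -
            (1 / 2 : ℂ) * ((Real.sin lam ^ 2 * Real.cos lam ^ (2 * k) : ℝ) : ℂ) *
              (ν z - (μ z) ^ 2)‖ ≤
          Real.sin lam ^ 3 * Real.cos lam ^ (3 * k) * Cz :=
  statement13_general χ μ ν c₀ C hA2 z
end

section
/- Let χ : ℂ → ℂ satisfy assumptions (A1) and (A2) with data (μ, ν, c₀, C). Fix 0 < λ < π/2 and set s = sin λ, c = cos λ, and let F(z) = ∏_{k=0}^{∞} χ(s·c^k·z). Then for every z ∈ ℂ there exist ε > 0 and a constant C'(z) ≥ 0 such that for all real t with 0 < |t| < ε, | log F(t·z) − (s/(1−c))·μ(z)·t − ½·(ν(z) − μ(z)²)·t² | ≤ C'(z)·|t|³. -/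
/-!
Put `g x = log χ(x z)` for real `x`. By (A2), `χ(x z) - 1 = μ(z) x + ½ ν(z) x² + O(x³)`, and
`log (1 + u) = u - u²/2 + O(u³)` turns this into `g x = μ(z) x + ½ (ν(z) - μ(z)²) x² + O(x³)`.
For small `t` all factors `χ(s cᵏ t z)` lie near `1`, so the partial products are
`exp (∑_{k<K} g(s cᵏ t))`; the series converges to a small number, on which the principal
logarithm inverts `exp`, hence `log F(t z) = ∑ₖ g(s cᵏ t)`. Summing the expansion of `g` along the
geometric sequence `s cᵏ t` produces the coefficients `∑ₖ s cᵏ = s/(1-c)` and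
`∑ₖ s² c²ᵏ = s²/(1-c²) = 1`, with an error `O(t³)` since `∑ₖ |s cᵏ|³ < ∞`.
-/

open Filter Topology

open Asymptotics

def HasSecondOrderExpansion (u : ℝ → ℂ) (a b : ℂ) : Prop :=
  (fun x : ℝ => u x - x * a - x ^ 2 * b) =O[𝓝 0] fun x => x ^ 3

theorem eventually_forall_mul_pow_mul {p : ℝ → Prop} (hp : ∀ᶠ x in 𝓝 0, p x) (s : ℝ) {c : ℝ}
    (hc : |c| ≤ 1) : ∀ᶠ t in 𝓝 0, ∀ k : ℕ, p (s * c ^ k * t) := by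
  obtain ⟨δ, hδ, h⟩ := Metric.eventually_nhds_iff.1 hp
  have hst : Tendsto (fun t : ℝ => s * t) (𝓝 0) (𝓝 0) := by
    simpa using (continuous_const_mul s).tendsto 0
  filter_upwards [hst.eventually (Metric.ball_mem_nhds 0 hδ)] with t ht k
  refine h ?_
  rw [Real.dist_0_eq_abs] at ht ⊢
  calc |s * c ^ k * t| = |c| ^ k * |s * t| := by rw [abs_mul, abs_mul, abs_mul, abs_pow]; ring
    _ ≤ |s * t| := mul_le_of_le_one_left (abs_nonneg _) (pow_le_one₀ (abs_nonneg c) hc)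
    _ < δ := ht

theorem summable_and_norm_tsum_comp_geometric_sub_le {g : ℝ → ℂ} {a b : ℂ} {K s c t : ℝ}
    (hc : |c| < 1)
    (hg : ∀ k : ℕ, ‖g (s * c ^ k * t) - ((s * c ^ k * t : ℝ) : ℂ) * a -
      ((s * c ^ k * t : ℝ) : ℂ) ^ 2 * b‖ ≤ K * |s * c ^ k * t| ^ 3) :
    Summable (fun k => g (s * c ^ k * t)) ∧
      ‖∑' k, g (s * c ^ k * t) - t * (s / (1 - c) * a) - t ^ 2 * (s ^ 2 / (1 - c ^ 2) * b)‖ ≤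
        K * |s| ^ 3 / (1 - |c| ^ 3) * |t| ^ 3 := by
  set r : ℕ → ℂ := fun k => g (s * c ^ k * t) - ((s * c ^ k * t : ℝ) : ℂ) * a -
    ((s * c ^ k * t : ℝ) : ℂ) ^ 2 * b
  have hc3 : |c| ^ 3 < 1 := pow_lt_one₀ (abs_nonneg c) hc (by norm_num)
  have hbound : HasSum (fun k : ℕ => K * |s * t| ^ 3 * (|c| ^ 3) ^ k)
      (K * |s * t| ^ 3 * (1 - |c| ^ 3)⁻¹) :=
    (hasSum_geometric_of_lt_one (by positivity) hc3).mul_left _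
  have hr : ∀ k, ‖r k‖ ≤ K * |s * t| ^ 3 * (|c| ^ 3) ^ k := fun k =>
    (hg k).trans_eq (by rw [abs_mul, abs_mul, abs_mul, abs_pow]; ring)
  have hlin : HasSum (fun k : ℕ => ((s * c ^ k * t : ℝ) : ℂ) * a) (t * (s / (1 - c) * a)) := by
    have h := (Complex.hasSum_ofReal.2
      (((hasSum_geometric_of_abs_lt_one hc).mul_left s).mul_right t)).mul_right a
    rwa [show ((s * (1 - c)⁻¹ * t : ℝ) : ℂ) * a = t * (s / (1 - c) * a) by push_cast; ring] at h
  have hquad : HasSum (fun k : ℕ => ((s * c ^ k * t : ℝ) : ℂ) ^ 2 * b)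
      (t ^ 2 * (s ^ 2 / (1 - c ^ 2) * b)) := by
    have hc2 : |c ^ 2| < 1 := by rw [abs_pow]; exact pow_lt_one₀ (abs_nonneg c) hc (by norm_num)
    have h := (Complex.hasSum_ofReal.2
      ((hasSum_geometric_of_abs_lt_one hc2).mul_left (s ^ 2 * t ^ 2))).mul_right b
    rw [show ((s ^ 2 * t ^ 2 * (1 - c ^ 2)⁻¹ : ℝ) : ℂ) * b = t ^ 2 * (s ^ 2 / (1 - c ^ 2) * b) by
      push_cast; ring] at h
    exact h.congr_fun fun k => by push_cast; ring
  obtain ⟨R, hR⟩ := Summable.of_norm_bounded hbound.summable hr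
  have hsum : HasSum (fun k => g (s * c ^ k * t)) (R + t * (s / (1 - c) * a) +
      t ^ 2 * (s ^ 2 / (1 - c ^ 2) * b)) :=
    ((hR.add hlin).add hquad).congr_fun fun k => by simp only [r]; ring
  refine ⟨hsum.summable, ?_⟩
  rw [hsum.tsum_eq, show ∀ A B : ℂ, R + A + B - A - B = R from fun _ _ => by ring, ← hR.tsum_eq]
  refine (tsum_of_norm_bounded hbound hr).trans_eq ?_
  rw [abs_mul]
  ring

theorem isBigO_ofReal_mul {l : Filter ℝ} (a : ℂ) : (fun x : ℝ => (x : ℂ) * a) =O[l] fun x => x :=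
  .of_bound ‖a‖ (.of_forall fun x => by simp [mul_comm])

namespace HasSecondOrderExpansion

variable {u : ℝ → ℂ} {a b : ℂ}

theorem congr_left {v : ℝ → ℂ} (hu : HasSecondOrderExpansion u a b) (h : u =ᶠ[𝓝 0] v) :
    HasSecondOrderExpansion v a b :=
  hu.congr' (h.mono fun x hx => by simp only [hx]) .rfl

theorem isBigO_sub_linear (hu : HasSecondOrderExpansion u a b) :
    (fun x : ℝ => u x - x * a) =O[𝓝 0] fun x => x ^ 2 := by
  have hquad : (fun x : ℝ => (x : ℂ) ^ 2 * b) =O[𝓝 0] fun x => x ^ 2 :=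
    .of_bound ‖b‖ (.of_forall fun x => by simp [mul_comm])
  simpa using (hu.trans (isLittleO_pow_pow (by norm_num : 2 < 3)).isBigO).add hquad

theorem isBigO_id (hu : HasSecondOrderExpansion u a b) : u =O[𝓝 0] fun x => x := by
  simpa using (hu.isBigO_sub_linear.trans (isLittleO_pow_id (by norm_num : 1 < 2)).isBigO).add
    (isBigO_ofReal_mul a)

theorem tendsto_zero (hu : HasSecondOrderExpansion u a b) : Tendsto u (𝓝 0) (𝓝 0) :=
  hu.isBigO_id.trans_tendsto tendsto_id

theorem log_one_add (hu : HasSecondOrderExpansion u a b) :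
    HasSecondOrderExpansion (fun x => Complex.log (1 + u x)) a (b - a ^ 2 / 2) := by
  have hlog : (fun x => Complex.log (1 + u x) - (u x - u x ^ 2 / 2)) =O[𝓝 0]
      fun x => u x ^ 3 := by
    convert (Complex.log_sub_logTaylor_isBigO 2).comp_tendsto hu.tendsto_zero using 2 with x
    · simp [Complex.logTaylor_succ, Complex.logTaylor_zero]
      ring
    · rfl
  have hsq : (fun x : ℝ => u x ^ 2 - x ^ 2 * a ^ 2) =O[𝓝 0] fun x => x ^ 3 := by
    have h := hu.isBigO_sub_linear.mul (hu.isBigO_id.add (isBigO_ofReal_mul a))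
    exact h.congr (fun _ => by ring) fun _ => by ring
  -- `log (1 + u) - x a - x² (b - a²/2)`
  --   `= (log (1 + u) - (u - u²/2)) + (u - x a - x² b) - (u² - x² a²)/2`
  exact ((hlog.trans (hu.isBigO_id.pow 3)).add hu |>.sub (hsq.const_mul_left (1 / 2))).congr_left
    fun _ => by ring

theorem tsum_comp_geometric (hu : HasSecondOrderExpansion u a b) (s : ℝ) {c : ℝ} (hc : |c| < 1) :
    (∀ᶠ t in 𝓝 0, Summable fun k => u (s * c ^ k * t)) ∧
      HasSecondOrderExpansion (fun t => ∑' k, u (s * c ^ k * t)) (s / (1 - c) * a)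
        (s ^ 2 / (1 - c ^ 2) * b) := by
  obtain ⟨K, hK⟩ := isBigO_iff.1 hu
  have h := (eventually_forall_mul_pow_mul hK s hc.le).mono fun t ht =>
    summable_and_norm_tsum_comp_geometric_sub_le (K := K) hc fun k => by
      simpa only [Real.norm_eq_abs, abs_pow] using ht k
  refine ⟨h.mono fun t ht => ht.1, isBigO_iff.2 ⟨K * |s| ^ 3 / (1 - |c| ^ 3), ?_⟩⟩
  filter_upwards [h] with t ht
  simpa only [Real.norm_eq_abs, abs_pow] using ht.2

theorem exists_bound (hu : HasSecondOrderExpansion u a b) :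
    ∃ ε > (0 : ℝ), ∃ C ≥ (0 : ℝ), ∀ t : ℝ, |t| < ε → ‖u t - t * a - t ^ 2 * b‖ ≤ C * |t| ^ 3 := by
  obtain ⟨C, hC, hbound⟩ := hu.exists_nonneg
  obtain ⟨ε, hε, h⟩ := Metric.eventually_nhds_iff.1 hbound.bound
  exact ⟨ε, hε, C, hC, fun t ht => by simpa [abs_pow] using h (show dist t 0 < ε by simpa using ht)⟩

end HasSecondOrderExpansion

theorem hasSecondOrderExpansion_log_of_tendsto_prod_geometric {f G : ℝ → ℂ} {a b : ℂ}
    (hf : HasSecondOrderExpansion (fun x => f x - 1) a b) (s : ℝ) {c : ℝ} (hc : |c| < 1)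
    (hG : ∀ t, Tendsto (fun K => ∏ k ∈ Finset.range K, f (s * c ^ k * t)) atTop (𝓝 (G t))) :
    HasSecondOrderExpansion (fun t => Complex.log (G t)) (s / (1 - c) * a)
      (s ^ 2 / (1 - c ^ 2) * (b - a ^ 2 / 2)) := by
  have hlog : HasSecondOrderExpansion (fun x => Complex.log (f x)) a (b - a ^ 2 / 2) := by
    simpa only [add_sub_cancel] using hf.log_one_add
  obtain ⟨hsum, hS⟩ := hlog.tsum_comp_geometric s hc
  have hne : ∀ᶠ t in 𝓝 0, ∀ k : ℕ, f (s * c ^ k * t) ≠ 0 := by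
    have hf1 : Tendsto f (𝓝 0) (𝓝 1) := by simpa using hf.tendsto_zero.add_const 1
    exact eventually_forall_mul_pow_mul (hf1.eventually_ne one_ne_zero) s hc.le
  have him : ∀ᶠ t in 𝓝 0,
      (∑' k, Complex.log (f (s * c ^ k * t))).im ∈ Set.Ioo (-Real.pi) Real.pi :=
    ((Complex.continuous_im.tendsto 0).comp hS.tendsto_zero).eventually
      (Ioo_mem_nhds (by simp [Real.pi_pos]) (by simp [Real.pi_pos]))
  refine hS.congr_left ?_
  filter_upwards [hsum, hne, him] with t hsum hne him
  rw [tendsto_nhds_unique (hG t) (Complex.hasProd_of_hasSum_log hne hsum.hasSum).tendsto_prod_nat,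
    Complex.log_exp him.1 him.2.le]

theorem AssumptionA2.hasSecondOrderExpansion {χ μ ν : ℂ → ℂ} {c₀ C : ℝ}
    (h : AssumptionA2 χ μ ν c₀ C) (z : ℂ) :
    HasSecondOrderExpansion (fun x : ℝ => χ (x * z) - 1) (μ z) (ν z / 2) := by
  have hsmall : ∀ᶠ x : ℝ in 𝓝 0, ‖(x : ℂ) * z‖ < c₀ := by
    have hcont : Continuous fun x : ℝ => ‖(x : ℂ) * z‖ := by fun_prop
    exact (hcont.tendsto' 0 0 (by simp)).eventually (gt_mem_nhds h.c₀_pos)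
  refine isBigO_iff.2 ⟨C * ‖z‖ ^ 3, ?_⟩
  filter_upwards [hsmall] with x hx
  have hexp := h.expansion _ hx
  rw [h.μ_hom, h.ν_hom] at hexp
  calc ‖χ (x * z) - 1 - x * μ z - (x : ℂ) ^ 2 * (ν z / 2)‖
      = ‖χ (x * z) - 1 - x * μ z - 1 / 2 * ((x : ℂ) ^ 2 * ν z)‖ := by ring_nf
    _ ≤ C * ‖(x : ℂ) * z‖ ^ 3 := hexp
    _ = C * ‖z‖ ^ 3 * ‖x ^ 3‖ := by simp only [norm_mul, norm_pow, Complex.norm_real]; ring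

theorem statement14_general (χ : ℂ → ℂ) (μ ν : ℂ → ℂ) (c₀ C : ℝ)
    (hA2 : AssumptionA2 χ μ ν c₀ C)
    (lam : ℝ) (hlam : 0 < lam) (hlam' : lam < Real.pi / 2)
    (F : ℂ → ℂ)
    (hF : ∀ w : ℂ, Tendsto (fun K : ℕ => ∏ k ∈ Finset.range K,
      χ (((Real.sin lam * Real.cos lam ^ k : ℝ) : ℂ) * w)) atTop (𝓝 (F w)))
    (z : ℂ) :
    ∃ ε > (0 : ℝ), ∃ C' : ℝ, 0 ≤ C' ∧ ∀ t : ℝ, 0 < |t| → |t| < ε →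
      ‖Complex.log (F ((t : ℂ) * z)) -
          ((Real.sin lam / (1 - Real.cos lam) : ℝ) : ℂ) * μ z * (t : ℂ) -
          (1 / 2 : ℂ) * (ν z - (μ z) ^ 2) * (t : ℂ) ^ 2‖ ≤ C' * |t| ^ 3 := by
  set s := Real.sin lam
  set c := Real.cos lam
  have hs : 0 < s := Real.sin_pos_of_pos_of_lt_pi hlam (by linarith [Real.pi_pos])
  have hc0 : 0 < c := Real.cos_pos_of_mem_Ioo ⟨by linarith, hlam'⟩
  have hsc : s ^ 2 = 1 - c ^ 2 := by rw [← Real.sin_sq_add_cos_sq lam]; ring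
  have hc : |c| < 1 := by rw [abs_of_pos hc0]; nlinarith
  have hcoef : (s : ℂ) ^ 2 / (1 - (c : ℂ) ^ 2) = 1 := by
    have hc2 : 1 - (c : ℂ) ^ 2 ≠ 0 := by norm_cast; nlinarith
    rw [div_eq_one_iff_eq hc2]
    exact_mod_cast hsc
  have hG := hasSecondOrderExpansion_log_of_tendsto_prod_geometric
    (hA2.hasSecondOrderExpansion z) s hc (G := fun t : ℝ => F (t * z)) fun t =>
      (hF _).congr fun K => Finset.prod_congr rfl fun k _ => by push_cast; ring_nf
  rw [hcoef, one_mul, ← sub_div] at hG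
  obtain ⟨ε, hε, C', hC', h⟩ := hG.exists_bound
  refine ⟨ε, hε, C', hC', fun t _ ht => ?_⟩
  convert h t ht using 3
  · push_cast
    ring
  · ring

/-- moments of the asymptotic state. Suppose `χ` satisfies (A1) and
(A2) with data `(μ, ν, c₀, C)`; fix `0 < λ < π/2`, `s = sin λ`, `c = cos λ`, and let
`F : ℂ → ℂ` be the infinite product `F w = ∏_{k≥0} χ(s c^k w)` (i.e. the limit of the
partial products). Then for every `z ∈ ℂ` there are `ε > 0` and `C'(z) ≥ 0` such that for
all real `t` with `0 < |t| < ε`: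
`|log F(t z) − (s/(1−c)) μ(z) t − ½ (ν(z) − μ(z)²) t²| ≤ C'(z) |t|³`. -/
theorem statement14 (χ : ℂ → ℂ) (μ ν : ℂ → ℂ) (c₀ C : ℝ)
    (hA1 : AssumptionA1 χ) (hA2 : AssumptionA2 χ μ ν c₀ C)
    (lam : ℝ) (hlam : 0 < lam) (hlam' : lam < Real.pi / 2)
    (F : ℂ → ℂ)
    (hF : ∀ w : ℂ, Tendsto (fun K : ℕ => ∏ k ∈ Finset.range K,
      χ (((Real.sin lam * Real.cos lam ^ k : ℝ) : ℂ) * w)) atTop (𝓝 (F w)))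
    (z : ℂ) :
    ∃ ε > (0 : ℝ), ∃ C' : ℝ, 0 ≤ C' ∧ ∀ t : ℝ, 0 < |t| → |t| < ε →
      ‖Complex.log (F ((t : ℂ) * z)) -
          ((Real.sin lam / (1 - Real.cos lam) : ℝ) : ℂ) * μ z * (t : ℂ) -
          (1 / 2 : ℂ) * (ν z - (μ z) ^ 2) * (t : ℂ) ^ 2‖ ≤ C' * |t| ^ 3 :=
  statement14_general χ μ ν c₀ C hA2 lam hlam hlam' F hF z
end
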